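/- arXiv:2605.11614 — 2 statements merged into one kernel-verified Lean document; each statement's English description precedes it below -/
import Mathlib

section
/- Under Assumptions S (i.i.d. sampling with E[‖x‖⁴] < ∞ and E[|f(z)|⁴] < ∞), I (Σxx := E[x xᵀ] positive definite), and A (E[(f(z) − xᵀβ*)² ‖x‖²] < ∞), the OLS estimator β̂_n := (XᵀX)⁻¹XᵀF (defined on the event that XᵀX is invertible) converges in probability to the linear projection coefficient β* := Σxx⁻¹ E[x f(z)] as n → ∞. -/
/-!
Dividing both factors by `n` gives `β̂ₙ = (n⁻¹ XᵀX)⁻¹ (n⁻¹ XᵀF)`. By the strong law of large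
numbers, `n⁻¹ XᵀX → Σxx` and `n⁻¹ XᵀF → E[x f(z)]` almost surely; the fourth moments make
`x xᵀ` and `f(z) x` integrable by Cauchy–Schwarz. Matrix inversion is continuous at the invertible
matrix `Σxx`, so `β̂ₙ → Σxx⁻¹ E[x f(z)] = β*` almost surely, hence in probability.
-/

open MeasureTheory ProbabilityTheory Matrix Filter

noncomputable section

/-- Population Gram matrix `Σxx = E[x xᵀ]`. -/
def SigmaXX {Ω : Type*} [MeasurableSpace Ω] (μ : Measure Ω) {p : ℕ}
    (x : Ω → Fin p → ℝ) : Matrix (Fin p) (Fin p) ℝ :=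
  Matrix.of fun a b => ∫ ω, x ω a * x ω b ∂μ

/-- Population linear projection coefficient `β* = Σxx⁻¹ E[x f(z)]`. -/
def betaStar {Ω : Type*} [MeasurableSpace Ω] (μ : Measure Ω) {p q : ℕ}
    (x : Ω → Fin p → ℝ) (z : Ω → Fin q → ℝ) (f : (Fin q → ℝ) → ℝ) : Fin p → ℝ :=
  (SigmaXX μ x)⁻¹ *ᵥ fun a => ∫ ω, x ω a * f (z ω) ∂μ

/-- Sample Gram matrix `XᵀX = ∑ᵢ xᵢ xᵢᵀ` from the first `n` observations. -/
def gramN {Ω : Type*} {p : ℕ} (X : ℕ → Ω → Fin p → ℝ) (n : ℕ) (ω : Ω) :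
    Matrix (Fin p) (Fin p) ℝ :=
  ∑ i ∈ Finset.range n, vecMulVec (X i ω) (X i ω)

/-- OLS estimator `β̂ₙ = (XᵀX)⁻¹ XᵀF`; the matrix inverse is the Mathlib nonsingular
inverse, which returns the junk value `0` outside the event that `XᵀX` is invertible. -/
def olsN {Ω : Type*} {p q : ℕ} (X : ℕ → Ω → Fin p → ℝ) (Z : ℕ → Ω → Fin q → ℝ)
    (f : (Fin q → ℝ) → ℝ) (n : ℕ) (ω : Ω) : Fin p → ℝ :=
  (gramN X n ω)⁻¹ *ᵥ ∑ i ∈ Finset.range n, f (Z i ω) • X i ω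

open scoped Topology
open Finset

section

variable {m : Type*} [Fintype m] [DecidableEq m]

theorem Matrix.inv_smul_mulVec_smul {K : Type*} [Field K] {c : K} (hc : c ≠ 0)
    (A : Matrix m m K) (v : m → K) : (c • A)⁻¹ *ᵥ (c • v) = A⁻¹ *ᵥ v := by
  by_cases hA : IsUnit A.det
  · have : Invertible c := invertibleOfNonzero hc
    rw [Matrix.inv_smul A c hA, invOf_eq_inv, smul_mulVec, mulVec_smul, smul_smul,
      inv_mul_cancel₀ hc, one_smul]
  · -- both inverses are the junk value `0`
    have hcA : ¬IsUnit (c • A).det := by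
      rwa [det_smul, IsUnit.mul_iff, and_iff_right (isUnit_iff_ne_zero.2 (pow_ne_zero _ hc))]
    rw [nonsing_inv_apply_not_isUnit _ hA, nonsing_inv_apply_not_isUnit _ hcA]
    simp

theorem Filter.Tendsto.matrix_inv_mulVec {𝕜 ι : Type*} [NormedField 𝕜] {l : Filter ι}
    {A : ι → Matrix m m 𝕜} {v : ι → m → 𝕜} {A₀ : Matrix m m 𝕜} {v₀ : m → 𝕜}
    (hA : Tendsto A l (𝓝 A₀)) (hv : Tendsto v l (𝓝 v₀)) (hA₀ : IsUnit A₀.det) :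
    Tendsto (fun i => (A i)⁻¹ *ᵥ v i) l (𝓝 (A₀⁻¹ *ᵥ v₀)) := by
  have hinv : ContinuousAt Inv.inv A₀ := by
    refine continuousAt_matrix_inv A₀ ?_
    rw [Ring.inverse_eq_inv']
    exact continuousAt_inv₀ hA₀.ne_zero
  exact ((continuous_fst.matrix_mulVec continuous_snd).tendsto _).comp
    ((hinv.tendsto.comp hA).prodMk_nhds hv)

variable {Ω : Type*} [MeasurableSpace Ω] {μ : Measure Ω}

theorem memLp_two_of_integrable_norm_pow_four [IsFiniteMeasure μ] {E : Type*}
    [NormedAddCommGroup E] {g : Ω → E} (hg : AEStronglyMeasurable g μ)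
    (h : Integrable (fun ω => ‖g ω‖ ^ 4) μ) : MemLp g 2 μ :=
  (memLp_two_iff_integrable_sq_norm hg).2 (integrable_norm_pow_of_le hg (by norm_num) h)

theorem strong_law_ae_comp {α E : Type*} [MeasurableSpace α] [NormedAddCommGroup E]
    [NormedSpace ℝ E] [CompleteSpace E] [MeasurableSpace E] [BorelSpace E]
    (Y : ℕ → Ω → α) (hindep : Pairwise fun i j => Y i ⟂ᵢ[μ] Y j)
    (hident : ∀ i, IdentDistrib (Y i) (Y 0) μ μ) {g : α → E} (hg : Measurable g)
    (hint : Integrable (fun ω => g (Y 0 ω)) μ) :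
    ∀ᵐ ω ∂μ, Tendsto (fun n : ℕ => (n : ℝ)⁻¹ • ∑ i ∈ range n, g (Y i ω)) atTop
      (𝓝 (∫ ω, g (Y 0 ω) ∂μ)) :=
  strong_law_ae (fun i ω => g (Y i ω)) hint (fun _ _ hij => (hindep hij).comp hg hg)
    fun i => (hident i).comp hg

theorem integral_outer_eq_sigmaXX {p : ℕ} {x : Ω → Fin p → ℝ}
    (hint : ∀ a b, Integrable (fun ω => x ω a * x ω b) μ) :
    ∫ ω, (fun a b => x ω a * x ω b : Fin p → Fin p → ℝ) ∂μ = SigmaXX μ x := by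
  funext a b
  rw [eval_integral (fun a => Integrable.of_eval (hint a)), eval_integral (hint a), SigmaXX,
    of_apply]

theorem integral_smul_eq_fun_integral_mul {p : ℕ} {x : Ω → Fin p → ℝ} {y : Ω → ℝ}
    (hint : ∀ a, Integrable (fun ω => y ω * x ω a) μ) :
    ∫ ω, y ω • x ω ∂μ = fun a => ∫ ω, x ω a * y ω ∂μ := by
  funext a
  rw [eval_integral (f := fun ω => y ω • x ω) hint]
  simp only [Pi.smul_apply, smul_eq_mul, mul_comm]

theorem AEStronglyMeasurable.matrix_inv_mulVec {A : Ω → Matrix m m ℝ} {v : Ω → m → ℝ}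
    (hA : AEStronglyMeasurable A μ) (hv : AEStronglyMeasurable v μ) : AEStronglyMeasurable (fun ω => (A ω)⁻¹ *ᵥ v ω) μ := by
  simp only [Matrix.inv_def, smul_mulVec, Ring.inverse_eq_inv']
  have hdet : AEStronglyMeasurable (fun ω => (A ω).det) μ :=
    continuous_id.matrix_det.comp_aestronglyMeasurable hA
  have hadj : AEStronglyMeasurable (fun ω => (A ω).adjugate) μ :=
    continuous_id.matrix_adjugate.comp_aestronglyMeasurable hA
  exact hdet.aemeasurable.inv.aestronglyMeasurable.smul
    ((continuous_fst.matrix_mulVec continuous_snd).comp_aestronglyMeasurable₂ hadj hv)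

theorem aestronglyMeasurable_olsN {p q : ℕ} {X : ℕ → Ω → Fin p → ℝ}
    {Z : ℕ → Ω → Fin q → ℝ} {f : (Fin q → ℝ) → ℝ} (hf : Measurable f)
    (hX : ∀ i, Measurable (X i)) (hZ : ∀ i, Measurable (Z i)) (n : ℕ) :
    AEStronglyMeasurable (olsN X Z f n) μ :=
  AEStronglyMeasurable.matrix_inv_mulVec
    (Finset.aestronglyMeasurable_fun_sum _ fun i _ =>
      (continuous_id.matrix_vecMulVec continuous_id).comp_aestronglyMeasurable
        (hX i).aestronglyMeasurable)
    (Finset.aestronglyMeasurable_fun_sum _ fun i _ =>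
      ((hf.comp (hZ i)).smul (hX i)).aestronglyMeasurable)

end

theorem ols_consistent_general
    {Ω : Type*} [MeasurableSpace Ω] (μ : Measure Ω) [IsProbabilityMeasure μ]
    {p q : ℕ} (X : ℕ → Ω → Fin p → ℝ) (Z : ℕ → Ω → Fin q → ℝ)
    (f : (Fin q → ℝ) → ℝ) (hf : Measurable f)
    (hX : ∀ i, Measurable (X i)) (hZ : ∀ i, Measurable (Z i))
    (hiid : iIndepFun (fun i ω => (X i ω, Z i ω)) μ)
    (hident : ∀ i, IdentDistrib (fun ω => (X i ω, Z i ω)) (fun ω => (X 0 ω, Z 0 ω)) μ μ)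
    (hS1 : Integrable (fun ω => ‖X 0 ω‖ ^ 4) μ)
    (hS2 : Integrable (fun ω => |f (Z 0 ω)| ^ 4) μ)
    (hI : (SigmaXX μ (X 0)).PosDef) :
    TendstoInMeasure μ (fun n => olsN X Z f n) atTop
      (fun _ => betaStar μ (X 0) (Z 0) f) := by
  have hX2 : MemLp (X 0) 2 μ :=
    memLp_two_of_integrable_norm_pow_four (hX 0).aestronglyMeasurable hS1
  have hF2 : MemLp (fun ω => f (Z 0 ω)) 2 μ :=
    memLp_two_of_integrable_norm_pow_four (hf.comp (hZ 0)).aestronglyMeasurable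
      (by simpa only [Real.norm_eq_abs] using hS2)
  have hXX : ∀ a b, Integrable (fun ω => X 0 ω a * X 0 ω b) μ := fun a b =>
    (hX2.eval a).integrable_mul (hX2.eval b)
  have hFX : ∀ a, Integrable (fun ω => f (Z 0 ω) * X 0 ω a) μ := fun a =>
    hF2.integrable_mul (hX2.eval a)
  have hindep : Pairwise fun i j => (fun ω => (X i ω, Z i ω)) ⟂ᵢ[μ] fun ω => (X j ω, Z j ω) :=
    fun _ _ hij => hiid.indepFun hij
  have hgram := strong_law_ae_comp _ hindep hident
    (g := fun u a b => u.1 a * u.1 b) (by fun_prop)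
    (Integrable.of_eval fun a => Integrable.of_eval (hXX a))
  have hscore := strong_law_ae_comp _ hindep hident
    (g := fun u => f u.2 • u.1) (by fun_prop) (Integrable.of_eval hFX)
  refine tendstoInMeasure_of_tendsto_ae (aestronglyMeasurable_olsN hf hX hZ) ?_
  filter_upwards [hgram, hscore] with ω hgramω hscoreω
  rw [integral_outer_eq_sigmaXX hXX] at hgramω
  rw [integral_smul_eq_fun_integral_mul hFX] at hscoreω
  refine (hgramω.matrix_inv_mulVec hscoreω (isUnit_iff_ne_zero.2 hI.det_pos.ne')).congr' ?_
  filter_upwards [eventually_ne_atTop 0] with n hn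
  exact Matrix.inv_smul_mulVec_smul (inv_ne_zero (Nat.cast_ne_zero.2 hn)) _ _

/-- OLS consistency. Under Assumption S (i.i.d. sampling with
`E[‖x‖⁴] < ∞`, `E[|f(z)|⁴] < ∞`), Assumption I (`Σxx` positive definite), and
Assumption A (`E[(f(z) − xᵀβ*)² ‖x‖²] < ∞`), the OLS estimator `β̂ₙ` converges in
probability to the linear projection coefficient `β* = Σxx⁻¹ E[x f(z)]`. -/
theorem ols_consistent
    {Ω : Type*} [MeasurableSpace Ω] (μ : Measure Ω) [IsProbabilityMeasure μ]
    {p q : ℕ} (X : ℕ → Ω → Fin p → ℝ) (Z : ℕ → Ω → Fin q → ℝ)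
    (f : (Fin q → ℝ) → ℝ) (hf : Measurable f)
    (hX : ∀ i, Measurable (X i)) (hZ : ∀ i, Measurable (Z i))
    (hiid : iIndepFun (fun i ω => (X i ω, Z i ω)) μ)
    (hident : ∀ i, IdentDistrib (fun ω => (X i ω, Z i ω)) (fun ω => (X 0 ω, Z 0 ω)) μ μ)
    (hS1 : Integrable (fun ω => ‖X 0 ω‖ ^ 4) μ)
    (hS2 : Integrable (fun ω => |f (Z 0 ω)| ^ 4) μ)
    (hI : (SigmaXX μ (X 0)).PosDef)
    (hA : Integrable (fun ω =>
        (f (Z 0 ω) - X 0 ω ⬝ᵥ betaStar μ (X 0) (Z 0) f) ^ 2 * ‖X 0 ω‖ ^ 2) μ) :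
    TendstoInMeasure μ (fun n => olsN X Z f n) atTop
      (fun _ => betaStar μ (X 0) (Z 0) f) :=
  ols_consistent_general μ X Z f hf hX hZ hiid hident hS1 hS2 hI
end
end

section
/- Under Assumptions S, I, and A, the rescaled HC0 sandwich estimator n · (XᵀX)⁻¹ (Σ_{i=1}^n x_i x_iᵀ r̂_i²) (XᵀX)⁻¹, with residuals r̂_i := f(z_i) − x_iᵀβ̂_n, converges in probability (entrywise) to the asymptotic covariance matrix Σxx⁻¹ Ω Σxx⁻¹, where Ω := E[x xᵀ (f(z) − xᵀβ*)²]. -/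
open MeasureTheory ProbabilityTheory Matrix Filter

noncomputable section

/-- `Ω = E[x xᵀ (f(z) − xᵀβ*)²]`. -/
def OmegaMat {Ω : Type*} [MeasurableSpace Ω] (μ : Measure Ω) {p q : ℕ}
    (x : Ω → Fin p → ℝ) (z : Ω → Fin q → ℝ) (f : (Fin q → ℝ) → ℝ) :
    Matrix (Fin p) (Fin p) ℝ :=
  Matrix.of fun a b =>
    ∫ ω, x ω a * x ω b * (f (z ω) - x ω ⬝ᵥ betaStar μ x z f) ^ 2 ∂μ

/-- Rescaled HC0 sandwich estimator
`n · (XᵀX)⁻¹ (∑ᵢ xᵢ xᵢᵀ r̂ᵢ²) (XᵀX)⁻¹` with residuals `r̂ᵢ = f(zᵢ) − xᵢᵀβ̂ₙ`. -/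
def sandwichN {Ω : Type*} {p q : ℕ} (X : ℕ → Ω → Fin p → ℝ) (Z : ℕ → Ω → Fin q → ℝ)
    (f : (Fin q → ℝ) → ℝ) (n : ℕ) (ω : Ω) : Matrix (Fin p) (Fin p) ℝ :=
  (n : ℝ) • ((gramN X n ω)⁻¹ *
    (∑ i ∈ Finset.range n,
      (f (Z i ω) - X i ω ⬝ᵥ olsN X Z f n ω) ^ 2 • vecMulVec (X i ω) (X i ω)) *
    (gramN X n ω)⁻¹)

/-
Write `rᵢ = f(zᵢ) - xᵢᵀβ*` and `eₙ = β̂ₙ - β*`. Expanding `r̂ᵢ² = (rᵢ - xᵢᵀeₙ)²` turns the meat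
`n⁻¹ ∑ r̂ᵢ² xᵢxᵢᵀ` into a quadratic polynomial in `eₙ` whose coefficients are the sample means of
`rᵢ² xᵢxᵢᵀ`, `rᵢ xᵢc xᵢxᵢᵀ` and `xᵢc xᵢd xᵢxᵢᵀ`. Each entry of these is a product of four variables
among `1, x_a, f(z), r`, all in `L⁴`, hence integrable, so by the strong law of large numbers the
coefficients converge almost surely, and so do `n⁻¹XᵀX → Σxx` and `n⁻¹XᵀF → E[x f(z)]`. Therefore
`eₙ → 0`, the meat tends to `Ω`, and by continuity of matrix inversion at `Σxx` the sandwich tends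
to `Σxx⁻¹ Ω Σxx⁻¹` almost surely, which implies convergence in probability.
-/

open Topology Finset

theorem Filter.Tendsto.matrix_mulVec {α n R : Type*} [Fintype n] [NormedCommRing R]
    {l : Filter α} {A : α → Matrix n n R} {v : α → n → R} {S : Matrix n n R} {c : n → R}
    (hA : Tendsto A l (𝓝 S)) (hv : Tendsto v l (𝓝 c)) :
    Tendsto (fun a => A a *ᵥ v a) l (𝓝 (S *ᵥ c)) := by
  have hcont : Continuous fun Av : Matrix n n R × (n → R) => Av.1 *ᵥ Av.2 :=
    continuous_fst.matrix_mulVec continuous_snd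
  exact (hcont.tendsto _).comp (hA.prodMk_nhds hv)

namespace Matrix

variable {n : Type*} [Fintype n] [DecidableEq n]

theorem inv_smul_of_ne_zero {K : Type*} [Field K] {c : K} (hc : c ≠ 0) (A : Matrix n n K) :
    (c • A)⁻¹ = c⁻¹ • A⁻¹ := by
  by_cases hA : IsUnit A.det
  · exact A.inv_smul' (Units.mk0 c hc) hA
  · have hcA : ¬IsUnit (c • A).det := by simpa [det_smul, hc] using hA
    rw [nonsing_inv_apply_not_isUnit _ hA, nonsing_inv_apply_not_isUnit _ hcA, smul_zero]

theorem _root_.Filter.Tendsto.matrix_inv {α R : Type*} [NormedCommRing R] [CompleteSpace R]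
    {l : Filter α} {A : α → Matrix n n R} {S : Matrix n n R} (hA : Tendsto A l (𝓝 S))
    (hS : IsUnit S.det) : Tendsto (fun a => (A a)⁻¹) l (𝓝 S⁻¹) :=
  (continuousAt_matrix_inv S
    (hS.unit_spec ▸ NormedRing.inverse_continuousAt hS.unit)).tendsto.comp hA

theorem measurable_det_of_measurable_apply {Ω : Type*} [MeasurableSpace Ω]
    {M : Ω → Matrix n n ℝ} (hM : ∀ i j, Measurable fun ω => M ω i j) :
    Measurable fun ω => (M ω).det := by
  simp_rw [det_apply]
  exact Finset.measurable_sum _ fun σ _ =>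
    (Finset.measurable_prod _ fun i _ => hM (σ i) i).const_smul _

theorem measurable_inv_apply {Ω : Type*} [MeasurableSpace Ω] {M : Ω → Matrix n n ℝ}
    (hM : ∀ i j, Measurable fun ω => M ω i j) (i j : n) :
    Measurable fun ω => (M ω)⁻¹ i j := by
  simp_rw [inv_def, smul_apply, adjugate_apply, smul_eq_mul, Ring.inverse_eq_inv']
  refine (measurable_det_of_measurable_apply hM).inv.mul
    (measurable_det_of_measurable_apply fun a b => ?_)
  simp_rw [updateRow_apply]
  exact Measurable.ite (MeasurableSet.const _) measurable_const (hM a b)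

end Matrix

theorem sum_sq_sub_dotProduct_smul {ι n R M : Type*} [Fintype n] [CommRing R] [AddCommGroup M]
    [Module R M] (s : Finset ι) (r : ι → R) (x : ι → n → R) (e : n → R) (v : ι → M) :
    ∑ i ∈ s, (r i - x i ⬝ᵥ e) ^ 2 • v i =
      ∑ i ∈ s, r i ^ 2 • v i - (2 : R) • ∑ c, e c • ∑ i ∈ s, (r i * x i c) • v i
        + ∑ c, ∑ d, (e c * e d) • ∑ i ∈ s, (x i c * x i d) • v i := by
  have hsq : ∀ i, (r i - x i ⬝ᵥ e) ^ 2 =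
      r i ^ 2 - 2 * ∑ c, e c * (r i * x i c) + ∑ c, ∑ d, e c * e d * (x i c * x i d) := by
    intro i
    have hlin : 2 * r i * (x i ⬝ᵥ e) = 2 * ∑ c, e c * (r i * x i c) := by
      rw [dotProduct, Finset.mul_sum, Finset.mul_sum]
      exact Finset.sum_congr rfl fun c _ => by ring
    have hquad : (x i ⬝ᵥ e) ^ 2 = ∑ c, ∑ d, e c * e d * (x i c * x i d) := by
      rw [sq, dotProduct, Finset.sum_mul_sum]
      exact Finset.sum_congr rfl fun c _ => Finset.sum_congr rfl fun d _ => by ring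
    rw [sub_sq, hlin, hquad]
  simp only [hsq, add_smul, sub_smul, Finset.sum_add_distrib, Finset.sum_sub_distrib,
    Finset.sum_smul, Finset.smul_sum, mul_smul]
  congr 1
  · congr 1
    exact Finset.sum_comm
  · exact Finset.sum_comm.trans (Finset.sum_congr rfl fun c _ => Finset.sum_comm)

theorem tendsto_avg_sq_sub_dotProduct_smul {n E : Type*} [Fintype n] [AddCommGroup E]
    [Module ℝ E] [TopologicalSpace E] [IsTopologicalAddGroup E] [ContinuousSMul ℝ E]
    (y : ℕ → ℝ) (x : ℕ → n → ℝ) (v : ℕ → E) {b : ℕ → n → ℝ} {β : n → ℝ}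
    (hb : Tendsto b atTop (𝓝 β)) {M : E}
    (hA : Tendsto (fun N : ℕ => (N : ℝ)⁻¹ • ∑ i ∈ range N, (y i - x i ⬝ᵥ β) ^ 2 • v i)
      atTop (𝓝 M))
    (hB : ∀ c, ∃ L, Tendsto (fun N : ℕ => (N : ℝ)⁻¹ •
      ∑ i ∈ range N, ((y i - x i ⬝ᵥ β) * x i c) • v i) atTop (𝓝 L))
    (hC : ∀ c d, ∃ L, Tendsto (fun N : ℕ => (N : ℝ)⁻¹ •
      ∑ i ∈ range N, (x i c * x i d) • v i) atTop (𝓝 L)) :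
    Tendsto (fun N : ℕ => (N : ℝ)⁻¹ • ∑ i ∈ range N, (y i - x i ⬝ᵥ b N) ^ 2 • v i)
      atTop (𝓝 M) := by
  choose LB hB using hB
  choose LC hC using hC
  have he : ∀ c, Tendsto (fun N => b N c - β c) atTop (𝓝 0) := fun c => by
    simpa using (tendsto_pi_nhds.1 hb c).sub_const (β c)
  have hlim := (hA.sub ((tendsto_finsetSum univ fun c _ => (he c).smul (hB c)).const_smul
    (2 : ℝ))).add (tendsto_finsetSum univ fun c _ => tendsto_finsetSum univ fun d _ =>
      ((he c).mul (he d)).smul (hC c d))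
  simp only [zero_smul, zero_mul, Finset.sum_const_zero, smul_zero, sub_zero, add_zero] at hlim
  refine hlim.congr fun N => ?_
  have hres : ∀ i, y i - x i ⬝ᵥ b N = (y i - x i ⬝ᵥ β) - x i ⬝ᵥ (b N - β) := fun i => by
    rw [dotProduct_sub]; ring
  simp only [hres, sum_sq_sub_dotProduct_smul, smul_add, smul_sub, Finset.smul_sum,
    smul_comm (N : ℝ)⁻¹, Pi.sub_apply]

section Deterministic

variable {Ω : Type*} {p q : ℕ} (X : ℕ → Ω → Fin p → ℝ) (Z : ℕ → Ω → Fin q → ℝ)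
  (f : (Fin q → ℝ) → ℝ) (ω : Ω)

theorem gramN_inv_eq_of_ne_zero {n : ℕ} (hn : n ≠ 0) :
    (gramN X n ω)⁻¹ = (n : ℝ)⁻¹ • ((n : ℝ)⁻¹ • gramN X n ω)⁻¹ := by
  have hn' : (n : ℝ) ≠ 0 := Nat.cast_ne_zero.2 hn
  rw [Matrix.inv_smul_of_ne_zero (inv_ne_zero hn'), inv_inv, smul_smul, inv_mul_cancel₀ hn',
    one_smul]

theorem olsN_eq_of_ne_zero {n : ℕ} (hn : n ≠ 0) :
    olsN X Z f n ω = ((n : ℝ)⁻¹ • gramN X n ω)⁻¹ *ᵥ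
      ((n : ℝ)⁻¹ • ∑ i ∈ range n, f (Z i ω) • X i ω) := by
  rw [olsN, gramN_inv_eq_of_ne_zero X ω hn, Matrix.smul_mulVec, Matrix.mulVec_smul]

theorem sandwichN_eq_of_ne_zero {n : ℕ} (hn : n ≠ 0) :
    sandwichN X Z f n ω = ((n : ℝ)⁻¹ • gramN X n ω)⁻¹ *
      ((n : ℝ)⁻¹ • ∑ i ∈ range n,
        (f (Z i ω) - X i ω ⬝ᵥ olsN X Z f n ω) ^ 2 • vecMulVec (X i ω) (X i ω)) *
      ((n : ℝ)⁻¹ • gramN X n ω)⁻¹ := by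
  have hn' : (n : ℝ) ≠ 0 := Nat.cast_ne_zero.2 hn
  rw [sandwichN, gramN_inv_eq_of_ne_zero X ω hn]
  simp only [Matrix.smul_mul, Matrix.mul_smul, smul_smul]
  rw [show (n : ℝ) * ((n : ℝ)⁻¹ * (n : ℝ)⁻¹) = (n : ℝ)⁻¹ by field_simp]

variable {S : Matrix (Fin p) (Fin p) ℝ}
  (hG : Tendsto (fun n : ℕ => (n : ℝ)⁻¹ • gramN X n ω) atTop (𝓝 S)) (hS : IsUnit S.det)
include hG hS

theorem tendsto_olsN {c : Fin p → ℝ}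
    (hc : Tendsto (fun n : ℕ => (n : ℝ)⁻¹ • ∑ i ∈ range n, f (Z i ω) • X i ω) atTop (𝓝 c)) :
    Tendsto (fun n => olsN X Z f n ω) atTop (𝓝 (S⁻¹ *ᵥ c)) :=
  ((hG.matrix_inv hS).matrix_mulVec hc).congr'
    ((eventually_ne_atTop 0).mono fun _ hn => (olsN_eq_of_ne_zero X Z f ω hn).symm)

theorem tendsto_sandwichN {M : Matrix (Fin p) (Fin p) ℝ}
    (hM : Tendsto (fun n : ℕ => (n : ℝ)⁻¹ • ∑ i ∈ range n,
        (f (Z i ω) - X i ω ⬝ᵥ olsN X Z f n ω) ^ 2 • vecMulVec (X i ω) (X i ω)) atTop (𝓝 M)) :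
    Tendsto (fun n => sandwichN X Z f n ω) atTop (𝓝 (S⁻¹ * M * S⁻¹)) :=
  (((hG.matrix_inv hS).mul hM).mul (hG.matrix_inv hS)).congr'
    ((eventually_ne_atTop 0).mono fun _ hn => (sandwichN_eq_of_ne_zero X Z f ω hn).symm)

end Deterministic

section Moments

variable {α : Type*} [MeasurableSpace α] {μ : Measure α}

theorem memLp_four_of_integrable_norm_pow {E : Type*} [NormedAddCommGroup E] {g : α → E}
    (hg : AEStronglyMeasurable g μ) (h : Integrable (fun a => ‖g a‖ ^ 4) μ) : MemLp g 4 μ := by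
  rw [← integrable_norm_rpow_iff hg (by norm_num) (by norm_num)]
  simpa using h

instance : ENNReal.HolderTriple 4 4 2 :=
  ⟨by rw [← two_mul, show (4 : ENNReal) = 2 * 2 by norm_num, ENNReal.mul_inv (by simp) (by simp),
    ← mul_assoc, ENNReal.mul_inv_cancel (by simp) (by simp), one_mul]⟩

theorem integrable_mul_of_memLp_four [IsFiniteMeasure μ] {g₁ g₂ : α → ℝ} (h₁ : MemLp g₁ 4 μ)
    (h₂ : MemLp g₂ 4 μ) : Integrable (fun a => g₁ a * g₂ a) μ :=
  (h₁.mono_exponent (by norm_num : (2 : ENNReal) ≤ 4)).integrable_mul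
    (h₂.mono_exponent (by norm_num : (2 : ENNReal) ≤ 4))

theorem integrable_mul_mul_mul_of_memLp_four {g₁ g₂ g₃ g₄ : α → ℝ} (h₁ : MemLp g₁ 4 μ)
    (h₂ : MemLp g₂ 4 μ) (h₃ : MemLp g₃ 4 μ) (h₄ : MemLp g₄ 4 μ) :
    Integrable (fun a => g₁ a * g₂ a * (g₃ a * g₄ a)) μ :=
  (h₂.mul' h₁ : MemLp _ 2 μ).integrable_mul (h₄.mul' h₃ : MemLp _ 2 μ)

theorem MeasureTheory.MemLp.sub_dotProduct {m : Type*} [Fintype m] {p : ENNReal} {y : α → ℝ}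
    {x : α → m → ℝ} (hy : MemLp y p μ) (hx : ∀ c, MemLp (fun a => x a c) p μ) (β : m → ℝ) :
    MemLp (fun a => y a - x a ⬝ᵥ β) p μ :=
  hy.sub (memLp_finsetSum _ fun c _ => (hx c).mul_const (β c))

end Moments

section StrongLaw

variable {Ω E : Type*} [MeasurableSpace Ω] {μ : Measure Ω} [MeasurableSpace E]
  {W : ℕ → Ω → E} (hindep : iIndepFun W μ) (hident : ∀ i, IdentDistrib (W i) (W 0) μ μ)
include hindep hident

theorem ae_tendsto_avg_comp {F : Type*} [NormedAddCommGroup F] [NormedSpace ℝ F]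
    [CompleteSpace F] [MeasurableSpace F] [BorelSpace F] {G : E → F} (hG : Measurable G)
    (hint : Integrable (fun ω => G (W 0 ω)) μ) :
    ∀ᵐ ω ∂μ, Tendsto (fun n : ℕ => (n : ℝ)⁻¹ • ∑ i ∈ range n, G (W i ω)) atTop
      (𝓝 (∫ ω, G (W 0 ω) ∂μ)) :=
  strong_law_ae (fun i ω => G (W i ω)) hint
    (fun _ _ hij => (hindep.indepFun hij).comp hG hG) fun i => (hident i).comp hG

theorem ae_tendsto_avg_smul {m : Type*} [Fintype m] {x : E → m → ℝ} {ψ : E → ℝ}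
    (hx : Measurable x) (hψ : Measurable ψ)
    (hint : ∀ a, Integrable (fun ω => x (W 0 ω) a * ψ (W 0 ω)) μ) :
    ∀ᵐ ω ∂μ, Tendsto (fun n : ℕ => (n : ℝ)⁻¹ • ∑ i ∈ range n, ψ (W i ω) • x (W i ω)) atTop
      (𝓝 fun a => ∫ ω, x (W 0 ω) a * ψ (W 0 ω) ∂μ) := by
  have hint' : ∀ a, Integrable (fun ω => (ψ (W 0 ω) • x (W 0 ω)) a) μ := fun a => by
    simpa [mul_comm] using hint a
  have h := ae_tendsto_avg_comp hindep hident (G := fun w => ψ w • x w) (hψ.smul hx)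
    (Integrable.of_eval hint')
  have hlim : ∫ ω, ψ (W 0 ω) • x (W 0 ω) ∂μ = fun a => ∫ ω, x (W 0 ω) a * ψ (W 0 ω) ∂μ := by
    ext a
    simp only [eval_integral hint', Pi.smul_apply, smul_eq_mul, mul_comm]
  rwa [hlim] at h

theorem ae_tendsto_avg_smul_vecMulVec {m : Type*} [Fintype m] {x : E → m → ℝ} {ψ : E → ℝ}
    (hx : Measurable x) (hψ : Measurable ψ)
    (hint : ∀ a b, Integrable (fun ω => ψ (W 0 ω) * (x (W 0 ω) a * x (W 0 ω) b)) μ) :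
    ∀ᵐ ω ∂μ, Tendsto (fun n : ℕ => (n : ℝ)⁻¹ •
        ∑ i ∈ range n, ψ (W i ω) • vecMulVec (x (W i ω)) (x (W i ω))) atTop
      (𝓝 (Matrix.of fun a b => ∫ ω, ψ (W 0 ω) * (x (W 0 ω) a * x (W 0 ω) b) ∂μ)) := by
  let G : E → m → m → ℝ := fun w a b => ψ w * (x w a * x w b)
  have hG : Measurable G := measurable_pi_lambda _ fun a => measurable_pi_lambda _ fun b =>
    hψ.mul (((measurable_pi_apply a).comp hx).mul ((measurable_pi_apply b).comp hx))
  have hint' : ∀ a, Integrable (fun ω => G (W 0 ω) a) μ := fun a => Integrable.of_eval (hint a)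
  have h := ae_tendsto_avg_comp hindep hident hG (Integrable.of_eval hint')
  have hlim : ∫ ω, G (W 0 ω) ∂μ =
      fun a b => ∫ ω, ψ (W 0 ω) * (x (W 0 ω) a * x (W 0 ω) b) ∂μ := by
    ext a b
    rw [eval_integral hint', eval_integral (hint a)]
  rw [hlim] at h
  exact h

end StrongLaw

section Model

variable {Ω : Type*} [MeasurableSpace Ω] {μ : Measure Ω} {p q : ℕ} {X : ℕ → Ω → Fin p → ℝ}
  {Z : ℕ → Ω → Fin q → ℝ} {f : (Fin q → ℝ) → ℝ}

theorem measurable_gramN_inv_apply (hX : ∀ i, Measurable (X i)) (n : ℕ) (a b : Fin p) :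
    Measurable fun ω => (gramN X n ω)⁻¹ a b := by
  refine Matrix.measurable_inv_apply (fun c d => ?_) a b
  simp only [gramN, Matrix.sum_apply, vecMulVec_apply]
  fun_prop

theorem measurable_olsN_apply (hf : Measurable f) (hX : ∀ i, Measurable (X i))
    (hZ : ∀ i, Measurable (Z i)) (n : ℕ) (a : Fin p) :
    Measurable fun ω => olsN X Z f n ω a := by
  simp only [olsN, mulVec, dotProduct, Finset.sum_apply, Pi.smul_apply, smul_eq_mul]
  exact Finset.measurable_sum _ fun k _ =>
    (measurable_gramN_inv_apply hX n a k).mul (by fun_prop)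

theorem measurable_sandwichN_apply (hf : Measurable f) (hX : ∀ i, Measurable (X i))
    (hZ : ∀ i, Measurable (Z i)) (n : ℕ) (a b : Fin p) :
    Measurable fun ω => sandwichN X Z f n ω a b := by
  have hinv := measurable_gramN_inv_apply hX n
  have hols := measurable_olsN_apply hf hX hZ n
  simp only [sandwichN, Matrix.smul_apply, Matrix.mul_apply, Matrix.sum_apply,
    vecMulVec_apply, dotProduct, smul_eq_mul]
  refine measurable_const.mul (Finset.measurable_sum _ fun l _ =>
    (Finset.measurable_sum _ fun k _ => (hinv a k).mul ?_).mul (hinv l b))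
  fun_prop

theorem ae_tendsto_sandwichN [IsProbabilityMeasure μ] (hf : Measurable f)
    (hX : ∀ i, Measurable (X i)) (hZ : ∀ i, Measurable (Z i))
    (hiid : iIndepFun (fun i ω => (X i ω, Z i ω)) μ)
    (hident : ∀ i, IdentDistrib (fun ω => (X i ω, Z i ω)) (fun ω => (X 0 ω, Z 0 ω)) μ μ)
    (hS1 : Integrable (fun ω => ‖X 0 ω‖ ^ 4) μ)
    (hS2 : Integrable (fun ω => |f (Z 0 ω)| ^ 4) μ) (hI : IsUnit (SigmaXX μ (X 0)).det) :
    ∀ᵐ ω ∂μ, Tendsto (fun n => sandwichN X Z f n ω) atTop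
      (𝓝 ((SigmaXX μ (X 0))⁻¹ * OmegaMat μ (X 0) (Z 0) f * (SigmaXX μ (X 0))⁻¹)) := by
  set β := betaStar μ (X 0) (Z 0) f
  have hx4 : ∀ a, MemLp (fun ω => X 0 ω a) 4 μ := fun a =>
    (memLp_four_of_integrable_norm_pow (hX 0).aestronglyMeasurable hS1).eval a
  have hy4 : MemLp (fun ω => f (Z 0 ω)) 4 μ :=
    memLp_four_of_integrable_norm_pow (hf.comp (hZ 0)).aestronglyMeasurable (by simpa using hS2)
  have hr4 := hy4.sub_dotProduct hx4 β
  have mx : Measurable (Prod.fst : (Fin p → ℝ) × (Fin q → ℝ) → Fin p → ℝ) := measurable_fst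
  have mr : Measurable fun w : (Fin p → ℝ) × (Fin q → ℝ) => f w.2 - w.1 ⬝ᵥ β := by
    simp only [dotProduct]; fun_prop
  have hG := ae_tendsto_avg_smul_vecMulVec hiid hident mx (ψ := fun _ => 1) measurable_const
    fun a b => by simpa using integrable_mul_of_memLp_four (hx4 a) (hx4 b)
  have hc := ae_tendsto_avg_smul hiid hident mx (hf.comp measurable_snd)
    fun a => integrable_mul_of_memLp_four (hx4 a) hy4
  have hA := ae_tendsto_avg_smul_vecMulVec hiid hident mx (mr.pow_const 2)
    fun a b => by
      simpa only [sq] using integrable_mul_mul_mul_of_memLp_four hr4 hr4 (hx4 a) (hx4 b)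
  have hB := ae_all_iff.2 fun c => ae_tendsto_avg_smul_vecMulVec hiid hident mx
    (mr.mul ((measurable_pi_apply c).comp mx))
    fun a b => integrable_mul_mul_mul_of_memLp_four hr4 (hx4 c) (hx4 a) (hx4 b)
  have hC := ae_all_iff.2 fun c => ae_all_iff.2 fun d =>
    ae_tendsto_avg_smul_vecMulVec hiid hident mx
      (((measurable_pi_apply c).comp mx).mul ((measurable_pi_apply d).comp mx))
    fun a b => integrable_mul_mul_mul_of_memLp_four (hx4 c) (hx4 d) (hx4 a) (hx4 b)
  filter_upwards [hG, hc, hA, hB, hC] with ω hG hc hA hB hC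
  have hGram : Tendsto (fun n : ℕ => (n : ℝ)⁻¹ • gramN X n ω) atTop (𝓝 (SigmaXX μ (X 0))) := by
    simpa [gramN, SigmaXX] using hG
  have hOmega : OmegaMat μ (X 0) (Z 0) f =
      Matrix.of fun a b => ∫ ω, (f (Z 0 ω) - X 0 ω ⬝ᵥ β) ^ 2 * (X 0 ω a * X 0 ω b) ∂μ := by
    ext a b
    exact integral_congr_ae (ae_of_all _ fun ω => by ring)
  rw [hOmega]
  exact tendsto_sandwichN X Z f ω hGram hI (tendsto_avg_sq_sub_dotProduct_smul _ _ _
    (tendsto_olsN X Z f ω hGram hI hc) hA (fun c => ⟨_, hB c⟩) fun c d => ⟨_, hC c d⟩)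

end Model

theorem sandwich_consistent_general
    {Ω : Type*} [MeasurableSpace Ω] (μ : Measure Ω) [IsProbabilityMeasure μ]
    {p q : ℕ} (X : ℕ → Ω → Fin p → ℝ) (Z : ℕ → Ω → Fin q → ℝ)
    (f : (Fin q → ℝ) → ℝ) (hf : Measurable f)
    (hX : ∀ i, Measurable (X i)) (hZ : ∀ i, Measurable (Z i))
    (hiid : iIndepFun (fun i ω => (X i ω, Z i ω)) μ)
    (hident : ∀ i, IdentDistrib (fun ω => (X i ω, Z i ω)) (fun ω => (X 0 ω, Z 0 ω)) μ μ)
    (hS1 : Integrable (fun ω => ‖X 0 ω‖ ^ 4) μ)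
    (hS2 : Integrable (fun ω => |f (Z 0 ω)| ^ 4) μ)
    (hI : (SigmaXX μ (X 0)).PosDef) :
    ∀ a b : Fin p,
      TendstoInMeasure μ (fun n ω => sandwichN X Z f n ω a b) atTop
        (fun _ => ((SigmaXX μ (X 0))⁻¹ * OmegaMat μ (X 0) (Z 0) f *
          (SigmaXX μ (X 0))⁻¹) a b) := by
  intro a b
  refine tendstoInMeasure_of_tendsto_ae
    (fun n => (measurable_sandwichN_apply hf hX hZ n a b).aestronglyMeasurable) ?_
  filter_upwards [ae_tendsto_sandwichN hf hX hZ hiid hident hS1 hS2 hI.det_pos.ne'.isUnit]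
    with ω h
  exact tendsto_pi_nhds.1 (tendsto_pi_nhds.1 h a) b

/-- consistency of the HC0 sandwich estimator. Under Assumptions
S, I and A, the rescaled HC0 sandwich estimator converges in probability, entrywise,
to the asymptotic covariance matrix `Σxx⁻¹ Ω Σxx⁻¹` where `Ω = E[x xᵀ (f(z) − xᵀβ*)²]`. -/
theorem sandwich_consistent
    {Ω : Type*} [MeasurableSpace Ω] (μ : Measure Ω) [IsProbabilityMeasure μ]
    {p q : ℕ} (X : ℕ → Ω → Fin p → ℝ) (Z : ℕ → Ω → Fin q → ℝ)
    (f : (Fin q → ℝ) → ℝ) (hf : Measurable f)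
    (hX : ∀ i, Measurable (X i)) (hZ : ∀ i, Measurable (Z i))
    (hiid : iIndepFun (fun i ω => (X i ω, Z i ω)) μ)
    (hident : ∀ i, IdentDistrib (fun ω => (X i ω, Z i ω)) (fun ω => (X 0 ω, Z 0 ω)) μ μ)
    (hS1 : Integrable (fun ω => ‖X 0 ω‖ ^ 4) μ)
    (hS2 : Integrable (fun ω => |f (Z 0 ω)| ^ 4) μ)
    (hI : (SigmaXX μ (X 0)).PosDef)
    (hA : Integrable (fun ω =>
        (f (Z 0 ω) - X 0 ω ⬝ᵥ betaStar μ (X 0) (Z 0) f) ^ 2 * ‖X 0 ω‖ ^ 2) μ) :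
    ∀ a b : Fin p,
      TendstoInMeasure μ (fun n ω => sandwichN X Z f n ω a b) atTop
        (fun _ => ((SigmaXX μ (X 0))⁻¹ * OmegaMat μ (X 0) (Z 0) f *
          (SigmaXX μ (X 0))⁻¹) a b) :=
  sandwich_consistent_general μ X Z f hf hX hZ hiid hident hS1 hS2 hI
end
end
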